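/- arXiv:1511.06132 — 2 statements merged into one kernel-verified Lean document; each statement's English description precedes it below -/
import Mathlib

section
/- Let G be a connected simple graph on n ≥ 2 vertices with diameter ρ. Then DEE(G) < n - 1 + e^{√(n(n-1)ρ² - 1)}. -/
/-!
Let `λᵢ` be the distance eigenvalues and `S = ∑ᵢⱼ d(i,j)²`. Then `∑ λᵢ = tr D = 0` and
`∑ λᵢ² = tr D² = S`, so every `|λᵢ| ≤ √S`. On `[-b, b]` the exponential lies below the parabola
`1 + x + (eᵇ - 1 - b) x² / b²`; summing over the eigenvalues gives `DEE ≤ n - 1 - √S + e^√S`.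
If `G` is not complete then `ρ ≥ 2`, and an edge contributes `1 < ρ²` to `S`, so
`S ≤ n(n-1)ρ² - 1`. For the complete graph `S = n(n-1)ρ²` is too large for this argument, but
there `D = J - I` has eigenvalues `n - 1` and `-1` only, and `DEE(Kₙ) = e^(n-1) + (n-1)/e`.
-/

namespace DistanceEstrada

variable {n : ℕ}

/-- The distance matrix of a simple graph on `Fin n`. -/
noncomputable def distMatrix (G : SimpleGraph (Fin n)) : Matrix (Fin n) (Fin n) ℝ :=
  fun i j => (G.dist i j : ℝ)

lemma distMatrix_isHermitian (G : SimpleGraph (Fin n)) : (distMatrix G).IsHermitian := by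
  unfold Matrix.IsHermitian
  ext i j
  simp [distMatrix, Matrix.conjTranspose_apply, SimpleGraph.dist_comm]

/-- The distance eigenvalues of `G` (in no particular order). -/
noncomputable def distEig (G : SimpleGraph (Fin n)) : Fin n → ℝ :=
  (distMatrix_isHermitian G).eigenvalues

/-- The distance Estrada index. -/
noncomputable def DEE (G : SimpleGraph (Fin n)) : ℝ :=
  ∑ i, Real.exp (distEig G i)

open Classical in
/-- The adjacency matrix of `G` over `ℝ`. -/
noncomputable def adjMat (G : SimpleGraph (Fin n)) : Matrix (Fin n) (Fin n) ℝ :=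
  fun i j => if G.Adj i j then 1 else 0

lemma adjMat_isHermitian (G : SimpleGraph (Fin n)) : (adjMat G).IsHermitian := by
  unfold Matrix.IsHermitian
  ext i j
  simp only [adjMat, Matrix.conjTranspose_apply, star_trivial]
  rw [SimpleGraph.adj_comm]

/-- The adjacency eigenvalues of `G` (in no particular order). -/
noncomputable def adjEig (G : SimpleGraph (Fin n)) : Fin n → ℝ :=
  (adjMat_isHermitian G).eigenvalues

/-- The Estrada index. -/
noncomputable def EE (G : SimpleGraph (Fin n)) : ℝ :=
  ∑ i, Real.exp (adjEig G i)

end DistanceEstrada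

namespace Real

lemma hasSum_exp_sub_one_sub (x : ℝ) :
    HasSum (fun k : ℕ => x ^ (k + 2) / (k + 2).factorial) (exp x - 1 - x) := by
  have hexp : HasSum (fun k : ℕ => x ^ k / k.factorial) (exp x) :=
    exp_eq_exp_ℝ ▸ NormedSpace.expSeries_div_hasSum_exp x
  simpa [Finset.sum_range_succ, sub_sub] using (hasSum_nat_add_iff' 2).mpr hexp

lemma sq_mul_exp_sub_one_sub_le {x b : ℝ} (hx : 0 ≤ x) (hxb : x ≤ b) :
    b ^ 2 * (exp x - 1 - x) ≤ x ^ 2 * (exp b - 1 - b) := by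
  refine hasSum_le (fun k => ?_) ((hasSum_exp_sub_one_sub x).mul_left _)
    ((hasSum_exp_sub_one_sub b).mul_left _)
  have hxk : x ^ k ≤ b ^ k := pow_le_pow_left₀ hx hxb k
  calc b ^ 2 * (x ^ (k + 2) / (k + 2).factorial)
      = x ^ 2 * b ^ 2 * x ^ k / (k + 2).factorial := by ring
    _ ≤ x ^ 2 * b ^ 2 * b ^ k / (k + 2).factorial := by gcongr
    _ = x ^ 2 * (b ^ (k + 2) / (k + 2).factorial) := by ring

lemma exp_le_one_add_add_sq_div_two_of_nonpos {x : ℝ} (hx : x ≤ 0) :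
    exp x ≤ 1 + x + x ^ 2 / 2 := by
  have h := quadratic_le_exp_of_nonneg (neg_nonneg.mpr hx)
  have hprod : exp x * exp (-x) = 1 := by rw [← exp_add, add_neg_cancel, exp_zero]
  -- `(1 + x + x²/2) (1 - x + x²/2) = 1 + x⁴/4 ≥ exp x * exp (-x)`
  nlinarith [exp_pos x, sq_nonneg x, sq_nonneg (x ^ 2)]

lemma sq_mul_exp_le_of_abs_le {x b : ℝ} (hxb : |x| ≤ b) :
    b ^ 2 * exp x ≤ b ^ 2 * (1 + x) + x ^ 2 * (exp b - 1 - b) := by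
  rcases le_total 0 x with hx | hx
  · nlinarith [sq_mul_exp_sub_one_sub_le hx ((le_abs_self x).trans hxb)]
  · have hb : 0 ≤ b := (abs_nonneg x).trans hxb
    have hquad := exp_le_one_add_add_sq_div_two_of_nonpos hx
    have hexpb := quadratic_le_exp_of_nonneg hb
    nlinarith [sq_nonneg b, sq_nonneg x, mul_nonneg (sq_nonneg x) (sq_nonneg b)]

lemma sum_exp_le_of_sum_eq_zero {ι : Type*} [Fintype ι] (x : ι → ℝ)
    (hsum : ∑ i, x i = 0) :
    ∑ i, exp (x i) ≤ Fintype.card ι - 1 - √(∑ i, x i ^ 2) + exp √(∑ i, x i ^ 2) := by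
  have hxS : ∀ i, x i ^ 2 ≤ ∑ i, x i ^ 2 := fun i =>
    Finset.single_le_sum (fun j _ => sq_nonneg (x j)) (Finset.mem_univ i)
  have hS : √(∑ i, x i ^ 2) ^ 2 = ∑ i, x i ^ 2 := sq_sqrt (by positivity)
  rcases (sqrt_nonneg (∑ i, x i ^ 2)).eq_or_lt with hb | hb
  · have hx : ∀ i, x i = 0 := fun i => by
      nlinarith [hxS i, sq_nonneg (x i), hb ▸ hS]
    simp [hx]
  · have hbound := Finset.sum_le_sum fun i (_ : i ∈ Finset.univ) =>
      sq_mul_exp_le_of_abs_le (abs_le_sqrt (hxS i))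
    generalize √(∑ i, x i ^ 2) = b at hb hS hbound ⊢
    rw [← Finset.mul_sum, Finset.sum_add_distrib, ← Finset.mul_sum, ← Finset.sum_mul,
      Finset.sum_add_distrib, hsum, ← hS] at hbound
    refine le_of_mul_le_mul_left ?_ (pow_pos hb 2)
    simp only [Finset.sum_const, Finset.card_univ, nsmul_eq_mul, mul_one, add_zero] at hbound
    linarith

end Real

namespace Matrix.IsHermitian

open Polynomial in
lemma trace_cfc {ι 𝕜 : Type*} [Fintype ι] [DecidableEq ι] [RCLike 𝕜]
    {A : Matrix ι ι 𝕜} (hA : A.IsHermitian) (f : ℝ → ℝ) :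
    (cfc f A).trace = ∑ i, (f (hA.eigenvalues i) : 𝕜) := by
  have hsplit : (cfc f A).charpoly.Splits := by
    rw [hA.charpoly_cfc_eq]
    exact Splits.prod fun i _ => Splits.X_sub_C _
  rw [Matrix.trace_eq_sum_roots_charpoly_of_splits hsplit, hA.charpoly_cfc_eq, roots_prod]
  · simp
  · simp [Finset.prod_ne_zero_iff, X_sub_C_ne_zero]

lemma trace_pow {ι 𝕜 : Type*} [Fintype ι] [DecidableEq ι] [RCLike 𝕜]
    {A : Matrix ι ι 𝕜} (hA : A.IsHermitian) (k : ℕ) :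
    (A ^ k).trace = ∑ i, (hA.eigenvalues i : 𝕜) ^ k := by
  rw [← cfc_pow_id (R := ℝ) A k hA.isSelfAdjoint, hA.trace_cfc]
  push_cast
  rfl

open scoped Matrix in
lemma eigenvalues_sq_eq {ι : Type*} [Fintype ι] [DecidableEq ι]
    {A : Matrix ι ι ℝ} (hA : A.IsHermitian) {p q : ℝ} (h : A ^ 2 = p • A + q • 1) (i : ι) :
    hA.eigenvalues i ^ 2 = p * hA.eigenvalues i + q := by
  have hv := hA.mulVec_eigenvectorBasis i
  have hne : (⇑(hA.eigenvectorBasis i) : ι → ℝ) ≠ 0 := by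
    simpa using hA.eigenvectorBasis.orthonormal.ne_zero i
  have := congrArg (· *ᵥ ⇑(hA.eigenvectorBasis i)) h
  simp only [sq, ← Matrix.mulVec_mulVec, hv, Matrix.mulVec_smul, Matrix.add_mulVec,
    Matrix.smul_mulVec, Matrix.one_mulVec, smul_smul, ← add_smul] at this
  rw [sq]
  exact smul_left_injective ℝ hne this

end Matrix.IsHermitian

namespace SimpleGraph

lemma sum_sum_dist_sq_lt {V : Type*} [Fintype V] (G : SimpleGraph V)
    (hdiam : 2 ≤ G.diam) :
    ∑ u, ∑ v, G.dist u v ^ 2 < Fintype.card V * (Fintype.card V - 1) * G.diam ^ 2 := by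
  classical
  have hfin : G.ediam ≠ ⊤ := G.ediam_ne_top_of_diam_ne_zero (by omega)
  have : Nontrivial V := G.nontrivial_of_diam_ne_zero (by omega)
  have hdist_le : ∀ u v, G.dist u v ^ 2 ≤ G.diam ^ 2 := fun u v =>
    Nat.pow_le_pow_left (G.dist_le_diam hfin) 2
  let u₀ := Classical.arbitrary V
  obtain ⟨w, hw⟩ := (G.preconnected_of_ediam_ne_top hfin).exists_adj_of_nontrivial u₀
  calc ∑ u, ∑ v, G.dist u v ^ 2 = ∑ u, ∑ v ∈ Finset.univ.erase u, G.dist u v ^ 2 := by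
        refine Finset.sum_congr rfl fun u _ => ?_
        rw [← Finset.add_sum_erase _ _ (Finset.mem_univ u), SimpleGraph.dist_self]
        simp
    _ < ∑ u : V, ∑ v ∈ Finset.univ.erase u, G.diam ^ 2 := by
        refine Finset.sum_lt_sum (fun u _ => Finset.sum_le_sum fun v _ => hdist_le u v)
          ⟨u₀, Finset.mem_univ _, Finset.sum_lt_sum (fun v _ => hdist_le u₀ v)
            ⟨w, Finset.mem_erase.mpr ⟨hw.ne.symm, Finset.mem_univ w⟩, ?_⟩⟩
        rw [SimpleGraph.dist_eq_one_iff_adj.mpr hw]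
        nlinarith
    _ = Fintype.card V * (Fintype.card V - 1) * G.diam ^ 2 := by
        simp [Finset.card_erase_of_mem, mul_assoc]

end SimpleGraph

namespace DistanceEstrada

open Real

variable {n : ℕ}

lemma trace_distMatrix (G : SimpleGraph (Fin n)) : (distMatrix G).trace = 0 := by
  simp [Matrix.trace, distMatrix]

lemma trace_distMatrix_sq (G : SimpleGraph (Fin n)) :
    (distMatrix G ^ 2).trace = ∑ i, ∑ j, (G.dist i j : ℝ) ^ 2 := by
  simp [Matrix.trace, distMatrix, sq, Matrix.mul_apply, SimpleGraph.dist_comm]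

lemma sum_distEig (G : SimpleGraph (Fin n)) : ∑ i, distEig G i = 0 := by
  rw [← trace_distMatrix G, (distMatrix_isHermitian G).trace_eq_sum_eigenvalues]
  rfl

lemma sum_distEig_sq (G : SimpleGraph (Fin n)) :
    ∑ i, distEig G i ^ 2 = ∑ i, ∑ j, (G.dist i j : ℝ) ^ 2 := by
  rw [← trace_distMatrix_sq G, (distMatrix_isHermitian G).trace_pow]
  rfl

lemma distMatrix_top : distMatrix (⊤ : SimpleGraph (Fin n)) = Matrix.of (fun _ _ => 1) - 1 := by
  ext i j
  by_cases h : i = j <;> simp [distMatrix, SimpleGraph.dist_top, h]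

lemma distMatrix_top_sq :
    distMatrix (⊤ : SimpleGraph (Fin n)) ^ 2 =
      ((n : ℝ) - 2) • distMatrix ⊤ + ((n : ℝ) - 1) • 1 := by
  have hJ : (Matrix.of (fun _ _ => 1) : Matrix (Fin n) (Fin n) ℝ) * Matrix.of (fun _ _ => 1) =
      (n : ℝ) • Matrix.of (fun _ _ => 1) := by
    ext i j
    simp [Matrix.mul_apply]
  rw [distMatrix_top, sq, sub_mul, mul_sub, mul_sub, hJ]
  simp only [Matrix.mul_one, Matrix.one_mul]
  module

lemma DEE_le (G : SimpleGraph (Fin n)) :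
    DEE G ≤ n - 1 - √(∑ i, ∑ j, (G.dist i j : ℝ) ^ 2) + exp √(∑ i, ∑ j, (G.dist i j : ℝ) ^ 2) := by
  have h := sum_exp_le_of_sum_eq_zero (distEig G) (sum_distEig G)
  rwa [sum_distEig_sq, Fintype.card_fin] at h

lemma distEig_top (i : Fin n) :
    distEig (⊤ : SimpleGraph (Fin n)) i = -1 ∨ distEig (⊤ : SimpleGraph (Fin n)) i = n - 1 := by
  have h := (distMatrix_isHermitian ⊤).eigenvalues_sq_eq distMatrix_top_sq i
  have : (distEig ⊤ i + 1) * (distEig ⊤ i - (n - 1)) = 0 := by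
    unfold distEig
    linear_combination h
  rcases mul_eq_zero.mp this with h | h
  · left; linarith
  · right; linarith

lemma DEE_top : DEE (⊤ : SimpleGraph (Fin n)) = exp (n - 1) + (n - 1) * exp (-1) := by
  rcases Nat.eq_zero_or_pos n with rfl | hn
  · simp [DEE]
  -- `exp` agrees on `{-1, n - 1}` with an affine function, and the eigenvalues sum to zero.
  have haffine : ∀ i, (n : ℝ) * exp (distEig ⊤ i) =
      n * exp (-1) + (distEig ⊤ i + 1) * (exp (n - 1) - exp (-1)) := fun i => by
    rcases distEig_top i with h | h <;> rw [h] <;> ring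
  have hsum := Finset.sum_congr rfl fun i (_ : i ∈ Finset.univ) => haffine i
  simp only [← Finset.mul_sum, Finset.sum_add_distrib, ← Finset.sum_mul, sum_distEig,
    Finset.sum_const, Finset.card_univ, Fintype.card_fin, nsmul_eq_mul] at hsum
  refine mul_left_cancel₀ (Nat.cast_ne_zero.mpr hn.ne') ?_
  rw [DEE, hsum]
  ring

lemma DEE_top_lt (hn : 2 ≤ n) :
    DEE (⊤ : SimpleGraph (Fin n)) < n - 1 + exp √(n * (n - 1) - 1) := by
  have hnR : (2 : ℝ) ≤ n := by exact_mod_cast hn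
  have hexp : (n - 1) * exp (-1) < (n : ℝ) - 1 := by
    nlinarith [exp_lt_one_iff.mpr (by norm_num : (-1 : ℝ) < 0)]
  have hsqrt : (n : ℝ) - 1 ≤ √(n * (n - 1) - 1) := le_sqrt_of_sq_le (by nlinarith)
  linarith [DEE_top (n := n), exp_le_exp.mpr hsqrt]

lemma DEE_lt_of_two_le_diam (G : SimpleGraph (Fin n)) (hdiam : 2 ≤ G.diam) :
    DEE G < n - 1 + exp √(n * (n - 1) * (G.diam : ℝ) ^ 2 - 1) := by
  have : Nontrivial (Fin n) := G.nontrivial_of_diam_ne_zero (by omega)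
  have hn : 2 ≤ n := Fin.nontrivial_iff_two_le.mp this
  have hS_le : ∑ i, ∑ j, (G.dist i j : ℝ) ^ 2 ≤ n * (n - 1) * (G.diam : ℝ) ^ 2 - 1 := by
    have h := (Nat.cast_le (α := ℝ)).mpr (Nat.succ_le_of_lt (G.sum_sum_dist_sq_lt hdiam))
    push_cast [Fintype.card_fin, Nat.cast_sub (by omega : 1 ≤ n)] at h
    linarith
  obtain ⟨u, v, huv⟩ := G.exists_dist_eq_diam
  have hS_pos : 0 < ∑ i, ∑ j, (G.dist i j : ℝ) ^ 2 :=
    Finset.sum_pos' (fun _ _ => by positivity) ⟨u, Finset.mem_univ _,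
      Finset.sum_pos' (fun _ _ => by positivity) ⟨v, Finset.mem_univ _, by
        rw [huv]; exact pow_pos (by exact_mod_cast hdiam.trans_lt' two_pos) 2⟩⟩
  calc DEE G ≤ n - 1 - √(∑ i, ∑ j, (G.dist i j : ℝ) ^ 2)
        + exp √(∑ i, ∑ j, (G.dist i j : ℝ) ^ 2) := DEE_le G
    _ < n - 1 + exp √(∑ i, ∑ j, (G.dist i j : ℝ) ^ 2) := by linarith [sqrt_pos.mpr hS_pos]
    _ ≤ _ := by gcongr

/-- **Theorem 5 (Shang).** For a connected graph `G` on `n ≥ 2` vertices with diameter `ρ`,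
`DEE(G) < n - 1 + e^{√(n(n-1)ρ² - 1)}`. -/
theorem distance_estrada_upper_bound_diam {n : ℕ} (hn : 2 ≤ n)
    (G : SimpleGraph (Fin n)) (hconn : G.Connected) :
    DEE G < (n : ℝ) - 1 +
      Real.exp (Real.sqrt ((n : ℝ) * ((n : ℝ) - 1) * (G.diam : ℝ) ^ 2 - 1)) := by
  have : Nontrivial (Fin n) := Fin.nontrivial_iff_two_le.mpr hn
  have hdiam : G.diam ≠ 0 := SimpleGraph.connected_iff_diam_ne_zero.mp hconn
  rcases (Nat.one_le_iff_ne_zero.mpr hdiam).eq_or_lt with hone | htwo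
  · obtain rfl : G = ⊤ := SimpleGraph.diam_eq_one.mp hone.symm
    simpa [← hone] using DEE_top_lt hn
  · exact DEE_lt_of_two_le_diam G htwo

end DistanceEstrada
end

section
/- Let G be a connected simple graph on n ≥ 3 vertices that is neither the complete graph K_n nor a complete s-partite graph K_{n_1,...,n_s} (for any s with 2 ≤ s ≤ n-1 and n_1+...+n_s = n). Then the smallest distance eigenvalue satisfies λ_n(D) < -2.383. -/
open Matrix

theorem Matrix.IsHermitian.posSemidef_sub_smul_one {n : Type*} [Fintype n] [DecidableEq n]
    {A : Matrix n n ℝ} (hA : A.IsHermitian) {r : ℝ}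
    (hr : ∀ i, r ≤ hA.eigenvalues i) : (A - r • 1).PosSemidef := by
  have : A - r • 1 = Unitary.conjStarAlgAut ℝ _ hA.eigenvectorUnitary
      (diagonal (RCLike.ofReal ∘ hA.eigenvalues) - r • 1) := by
    rw [map_sub, map_smul, map_one, ← hA.spectral_theorem]
  rw [this, Unitary.conjStarAlgAut_apply, Unitary.isUnit_coe.posSemidef_star_right_conjugate_iff,
    smul_one_eq_diagonal, diagonal_sub, posSemidef_diagonal_iff]
  simpa using hr

theorem Matrix.IsHermitian.mul_dotProduct_le_dotProduct_submatrix_mulVec {n m : Type*}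
    [Fintype n] [DecidableEq n] [Fintype m] [DecidableEq m]
    {A : Matrix n n ℝ} (hA : A.IsHermitian) {r : ℝ}
    (hr : ∀ i, r ≤ hA.eigenvalues i) {f : m → n} (hf : Function.Injective f) (c : m → ℝ) :
    r * (c ⬝ᵥ c) ≤ c ⬝ᵥ A.submatrix f f *ᵥ c := by
  have := ((hA.posSemidef_sub_smul_one hr).submatrix f).dotProduct_mulVec_nonneg c
  simp only [submatrix_sub, submatrix_smul, Pi.sub_apply, Pi.smul_apply, submatrix_one f hf,
    sub_mulVec, dotProduct_sub, smul_mulVec, one_mulVec, dotProduct_smul, smul_eq_mul,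
    star_trivial] at this
  linarith

namespace SimpleGraph

variable {V : Type*} {G : SimpleGraph V} {u v : V}

theorem ne_of_pos_dist (h : 0 < G.dist u v) : u ≠ v := by
  rintro rfl
  simp at h

theorem Reachable.three_le_dist (hr : G.Reachable u v) (hne : u ≠ v) (hnadj : ¬G.Adj u v)
    (hcn : G.commonNeighbors u v = ∅) : 3 ≤ G.dist u v := by
  have := two_lt_edist_iff.mpr ⟨hne, hnadj, hcn⟩
  rw [← hr.coe_dist_eq_edist] at this
  exact_mod_cast this

theorem Connected.ne_bot_of_ne_top (hconn : G.Connected) (hG : G ≠ ⊤) : G ≠ ⊥ := by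
  rintro rfl
  have := (connected_bot_iff.mp hconn).1
  exact hG (Subsingleton.elim _ _)

theorem IsCompleteMultipartite.exists_fin_partition [Fintype V]
    (h : G.IsCompleteMultipartite) (htop : G ≠ ⊤) (hbot : G ≠ ⊥) :
    ∃ s, 2 ≤ s ∧ s < Fintype.card V ∧ ∃ P : V → Fin s,
      Function.Surjective P ∧ ∀ u v, G.Adj u v ↔ P u ≠ P v := by
  classical
  let e := Fintype.equivFin (Quotient h.setoid)
  let P : V → Fin (Fintype.card (Quotient h.setoid)) := fun v => e ⟦v⟧
  have hP : Function.Surjective P := e.surjective.comp Quotient.mk_surjective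
  have hadj : ∀ u v, G.Adj u v ↔ P u ≠ P v := fun u v => by
    simp only [P, ne_eq, e.apply_eq_iff_eq, Quotient.eq]
    exact not_not.symm
  have hle : Fintype.card (Quotient h.setoid) ≤ Fintype.card V := by
    simpa using Fintype.card_le_of_surjective P hP
  refine ⟨_, ?_, hle.lt_of_ne ?_, P, hP, hadj⟩
  · obtain ⟨u, v, huv⟩ : ∃ u v, G.Adj u v := by
      by_contra! h; exact hbot (eq_bot_iff_forall_not_adj.mpr h)
    exact Fin.nontrivial_iff_two_le.mp ⟨_, _, (hadj u v).mp huv⟩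
  · intro hcard
    have hinj : Function.Injective P :=
      ((Fintype.bijective_iff_surjective_and_card P).mpr ⟨hP, by simp [hcard]⟩).injective
    exact htop (top_le_iff.mp fun u v huv => (hadj u v).mpr (hinj.ne huv))

end SimpleGraph

namespace DistanceEstrada

open SimpleGraph

variable {n : ℕ} {G : SimpleGraph (Fin n)} {lam : ℝ}

theorem mul_sum_sq_le_sum_dist (hlow : ∀ i, lam ≤ distEig G i) {k : ℕ} {f : Fin k → Fin n}
    (hf : Function.Injective f) (c : Fin k → ℝ) :
    lam * ∑ i, c i ^ 2 ≤ ∑ i, ∑ j, c i * c j * G.dist (f i) (f j) := by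
  have := (distMatrix_isHermitian G).mul_dotProduct_le_dotProduct_submatrix_mulVec hlow hf c
  convert this using 1
  · simp [dotProduct, sq]
  · simp only [dotProduct, mulVec, submatrix_apply, distMatrix, Finset.mul_sum]
    congr! 2 with i - j -
    ring

theorem lt_of_forall_le_distEig_of_adj_of_three_le_dist (hlow : ∀ i, lam ≤ distEig G i)
    {x z y : Fin n} (hxz : G.Adj x z) (hxy : 2 ≤ G.dist x y) (hzy : 3 ≤ G.dist z y) :
    lam < -2.383 := by
  have hf : Function.Injective ![x, z, y] := by
    simp only [Matrix.vecCons, Fin.cons_injective_iff]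
    simp [hxz.ne, ne_of_pos_dist (by omega : 0 < G.dist x y),
      ne_of_pos_dist (by omega : 0 < G.dist z y), Function.Injective, eq_iff_true_of_subsingleton]
  have key := mul_sum_sq_le_sum_dist hlow hf ![1, 1, -1]
  simp only [Fin.sum_univ_three, cons_val_zero, cons_val_one, cons_val_two, head_cons, tail_cons,
    dist_self, dist_eq_one_iff_adj.mpr hxz, dist_eq_one_iff_adj.mpr hxz.symm,
    dist_comm (G := G) (u := y), Nat.cast_zero, Nat.cast_one] at key
  have : (2 : ℝ) ≤ G.dist x y := by exact_mod_cast hxy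
  have : (3 : ℝ) ≤ G.dist z y := by exact_mod_cast hzy
  linarith

theorem lt_of_forall_le_distEig_of_paw (hlow : ∀ i, lam ≤ distEig G i) {x z w y : Fin n}
    (hxz : G.Adj x z) (hxw : G.Adj x w) (hzw : G.Adj z w) (hwy : G.Adj w y)
    (hxy : 2 ≤ G.dist x y) (hzy : 2 ≤ G.dist z y) : lam < -2.383 := by
  have hf : Function.Injective ![x, z, w, y] := by
    simp only [Matrix.vecCons, Fin.cons_injective_iff]
    simp [hxz.ne, hxw.ne, hzw.ne, hwy.ne, ne_of_pos_dist (by omega : 0 < G.dist x y),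
      ne_of_pos_dist (by omega : 0 < G.dist z y), Function.Injective, eq_iff_true_of_subsingleton]
  have key := mul_sum_sq_le_sum_dist hlow hf ![13, 13, -2, -21]
  simp only [Fin.sum_univ_four, cons_val_zero, cons_val_one, cons_val_two, cons_val_three,
    head_cons, tail_cons, dist_self, dist_eq_one_iff_adj.mpr, hxz, hxw, hzw, hwy, hxz.symm,
    hxw.symm, hzw.symm, hwy.symm, dist_comm (G := G) (u := y), Nat.cast_zero, Nat.cast_one] at key
  have : (2 : ℝ) ≤ G.dist x y := by exact_mod_cast hxy
  have : (2 : ℝ) ≤ G.dist z y := by exact_mod_cast hzy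
  linarith

theorem lt_of_forall_le_distEig_of_path (hlow : ∀ i, lam ≤ distEig G i) {x z w y : Fin n}
    (hzx : G.Adj z x) (hxw : G.Adj x w) (hwy : G.Adj w y)
    (hzw : 2 ≤ G.dist z w) (hxy : 2 ≤ G.dist x y) (hzy : 2 ≤ G.dist z y) : lam < -2.383 := by
  have hf : Function.Injective ![x, z, w, y] := by
    simp only [Matrix.vecCons, Fin.cons_injective_iff]
    simp [hzx.ne.symm, hxw.ne, hwy.ne, ne_of_pos_dist (by omega : 0 < G.dist x y),
      ne_of_pos_dist (by omega : 0 < G.dist z y), ne_of_pos_dist (by omega : 0 < G.dist z w),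
      Function.Injective, eq_iff_true_of_subsingleton]
  have key := mul_sum_sq_le_sum_dist hlow hf ![1, 2, -1, -2]
  simp only [Fin.sum_univ_four, cons_val_zero, cons_val_one, cons_val_two, cons_val_three,
    head_cons, tail_cons, dist_self, dist_eq_one_iff_adj.mpr, hzx, hxw, hwy, hzx.symm, hxw.symm,
    hwy.symm, dist_comm (G := G) (u := y), dist_comm (G := G) (u := w) (v := z), Nat.cast_zero,
    Nat.cast_one] at key
  have : (2 : ℝ) ≤ G.dist x y := by exact_mod_cast hxy
  have : (2 : ℝ) ≤ G.dist z y := by exact_mod_cast hzy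
  have : (2 : ℝ) ≤ G.dist z w := by exact_mod_cast hzw
  linarith

theorem lt_of_forall_le_distEig_of_isPathGraph3Compl (hconn : G.Connected)
    (hlow : ∀ i, lam ≤ distEig G i) {x z y : Fin n} (h : G.IsPathGraph3Compl y x z) :
    lam < -2.383 := by
  have hxy : 2 ≤ G.dist x y :=
    dist_comm ▸ hconn.one_lt_dist_of_ne_of_not_adj h.ne_fst h.not_adj_fst
  have hzy : 2 ≤ G.dist z y :=
    dist_comm ▸ hconn.one_lt_dist_of_ne_of_not_adj h.ne_snd h.not_adj_snd
  by_cases hcn : (G.commonNeighbors x y).Nonempty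
  · obtain ⟨w, hxw, hyw⟩ := hcn
    by_cases hzw : G.Adj z w
    · exact lt_of_forall_le_distEig_of_paw hlow h.adj hxw hzw hyw.symm hxy hzy
    · have hzw' : 2 ≤ G.dist z w := hconn.one_lt_dist_of_ne_of_not_adj
        (by rintro rfl; exact h.not_adj_snd hyw) hzw
      exact lt_of_forall_le_distEig_of_path hlow h.adj.symm hxw hyw.symm hzw' hxy hzy
  · have hxy3 : 3 ≤ G.dist x y := (hconn x y).three_le_dist h.ne_fst.symm
      (fun e => h.not_adj_fst e.symm) (Set.not_nonempty_iff_eq_empty.mp hcn)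
    exact lt_of_forall_le_distEig_of_adj_of_three_le_dist hlow h.adj.symm hzy hxy3

theorem least_distance_eigenvalue_lt_general {n : ℕ}
    (G : SimpleGraph (Fin n)) (hconn : G.Connected)
    (hnotK : G ≠ ⊤)
    (hnotMulti : ¬ ∃ s : ℕ, 2 ≤ s ∧ s ≤ n - 1 ∧ ∃ P : Fin n → Fin s,
      Function.Surjective P ∧ ∀ u v : Fin n, G.Adj u v ↔ P u ≠ P v)
    (lamn : ℝ) (hlamn : IsLeast (Set.range (distEig G)) lamn) :
    lamn < -2.383 := by
  have hlow : ∀ i, lamn ≤ distEig G i := fun i => hlamn.2 ⟨i, rfl⟩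
  have hcm : ¬G.IsCompleteMultipartite := fun h => hnotMulti <| by
    obtain ⟨s, hs2, hsn, hP⟩ := h.exists_fin_partition hnotK (hconn.ne_bot_of_ne_top hnotK)
    exact ⟨s, hs2, by rw [Fintype.card_fin] at hsn; omega, hP⟩
  obtain ⟨y, x, z, hyxz⟩ := exists_isPathGraph3Compl_of_not_isCompleteMultipartite hcm
  exact lt_of_forall_le_distEig_of_isPathGraph3Compl hconn hlow hyxz

/-- **Lemma 4, third part.** If a connected graph `G` on `n ≥ 3` vertices is neither complete nor
complete multipartite, then its smallest distance eigenvalue satisfies `λₙ(D) < -2.383`. -/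
theorem least_distance_eigenvalue_lt {n : ℕ} (hn : 3 ≤ n)
    (G : SimpleGraph (Fin n)) (hconn : G.Connected)
    (hnotK : G ≠ ⊤)
    (hnotMulti : ¬ ∃ s : ℕ, 2 ≤ s ∧ s ≤ n - 1 ∧ ∃ P : Fin n → Fin s,
      Function.Surjective P ∧ ∀ u v : Fin n, G.Adj u v ↔ P u ≠ P v)
    (lamn : ℝ) (hlamn : IsLeast (Set.range (distEig G)) lamn) :
    lamn < -2.383 :=
  least_distance_eigenvalue_lt_general G hconn hnotK hnotMulti lamn hlamn

end DistanceEstrada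
end
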